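/- Let z ∈ ℂ. If there exists a nonnegative integer k such that |q_{F_k}(z)| > 1 and |q_{F_{k+1}}(z)| > 1, then the sequence (q_{F_n}(z))_{n≥0} is unbounded. -/

import Mathlib

/-!
Writing `w = q_{F_{n+1}} q_{F_n}`, the recursion reads `q_{F_{n+2}} = w / r - (1/r - 1)` with `0 < r ≤ 1`,
and `‖w / r - (1/r - 1)‖ ≥ ‖w‖ + (1/r - 1)(‖w‖ - 1) ≥ ‖w‖` as soon as `‖w‖ ≥ 1`. Hence once two consecutive
terms exceed `c = min (‖q_{F_k}‖, ‖q_{F_{k+1}}‖) > 1` in norm, the norms satisfy `a_{n+2} ≥ a_{n+1} a_n` and grow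
at least like `c ^ n`.
-/

open Filter

/-- `rr p n = r_n = p (⌊(n+1)/2⌋ + 1)`. -/
noncomputable def rr (p : ℕ → ℝ) (n : ℕ) : ℝ := p ((n+1)/2 + 1)

/-- `qF p z n = q_{F_n}(z)`. -/
noncomputable def qF (p : ℕ → ℝ) (z : ℂ) : ℕ → ℂ
  | 0 => (z - (1 - (p 1 : ℂ))) / (p 1 : ℂ)
  | 1 => (1 / (p 2 : ℂ)) * (qF p z 0) ^ 2 - (1 / (p 2 : ℂ) - 1)
  | (n+2) => (1 / (rr p (n+2) : ℂ)) * qF p z (n+1) * qF p z n - (1 / (rr p (n+2) : ℂ) - 1)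

lemma norm_le_norm_inv_mul_sub {r : ℝ} (hr0 : 0 < r) (hr1 : r ≤ 1) {w : ℂ} (hw : 1 ≤ ‖w‖) :
    ‖w‖ ≤ ‖(1 / (r : ℂ)) * w - (1 / (r : ℂ) - 1)‖ := by
  have h1r : 1 ≤ 1 / r := one_le_one_div hr0 hr1
  have hscale : ‖(1 / (r : ℂ)) * w‖ = 1 / r * ‖w‖ := by
    rw [norm_mul, ← Complex.ofReal_one, ← Complex.ofReal_div, Complex.norm_real,
      Real.norm_of_nonneg (by positivity)]
  have hshift : ‖(1 / (r : ℂ)) - 1‖ = 1 / r - 1 := by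
    rw [← Complex.ofReal_one, ← Complex.ofReal_div, ← Complex.ofReal_sub, Complex.norm_real,
      Real.norm_of_nonneg (by linarith)]
  calc ‖w‖ ≤ 1 / r * ‖w‖ - (1 / r - 1) := by nlinarith
    _ ≤ ‖(1 / (r : ℂ)) * w - (1 / (r : ℂ) - 1)‖ := by
      rw [← hscale, ← hshift]; exact norm_sub_norm_le _ _

lemma norm_mul_norm_le_norm_qF_add_two (p : ℕ → ℝ) (hp : ∀ i, 1 ≤ i → 0 < p i ∧ p i ≤ 1)
    (z : ℂ) (n : ℕ) (h1 : 1 ≤ ‖qF p z (n+1)‖) (h0 : 1 ≤ ‖qF p z n‖) :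
    ‖qF p z (n+1)‖ * ‖qF p z n‖ ≤ ‖qF p z (n+2)‖ := by
  obtain ⟨hr0, hr1⟩ : 0 < rr p (n+2) ∧ rr p (n+2) ≤ 1 := hp _ (Nat.le_add_left 1 _)
  rw [← norm_mul]
  have := norm_le_norm_inv_mul_sub hr0 hr1 (w := qF p z (n+1) * qF p z n)
    (by rw [norm_mul]; nlinarith)
  rwa [← mul_assoc] at this

lemma pow_le_of_mul_le_add_two {a : ℕ → ℝ} {c : ℝ} (hc : 1 ≤ c) (h0 : c ≤ a 0) (h1 : c ≤ a 1)
    (ha : ∀ n, 1 ≤ a (n+1) → 1 ≤ a n → a (n+1) * a n ≤ a (n+2)) (n : ℕ) :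
    c ≤ a n ∧ c ^ (n+1) ≤ a (n+1) := by
  induction n with
  | zero => simpa using ⟨h0, h1⟩
  | succ m ih =>
    obtain ⟨hm, hm1⟩ := ih
    have hc_le : c ≤ a (m+1) := (le_self_pow₀ hc (Nat.succ_ne_zero m)).trans hm1
    refine ⟨hc_le, ?_⟩
    calc c ^ (m+1+1) = c ^ (m+1) * c := pow_succ c (m+1)
      _ ≤ a (m+1) * a m := mul_le_mul hm1 hm (by linarith) (by linarith)
      _ ≤ a (m+2) := ha m (hc.trans hc_le) (hc.trans hm)

lemma tendsto_atTop_of_mul_le_add_two {a : ℕ → ℝ} {c : ℝ} (hc : 1 < c) (h0 : c ≤ a 0)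
    (h1 : c ≤ a 1) (ha : ∀ n, 1 ≤ a (n+1) → 1 ≤ a n → a (n+1) * a n ≤ a (n+2)) :
    Tendsto a atTop atTop := by
  rw [← tendsto_add_atTop_iff_nat 1]
  exact tendsto_atTop_mono (fun n => (pow_le_of_mul_le_add_two hc.le h0 h1 ha n).2)
    ((tendsto_pow_atTop_atTop_of_one_lt hc).comp (tendsto_add_atTop_nat 1))

/-- If `|q_{F_k}(z)| > 1` and `|q_{F_{k+1}}(z)| > 1` for some `k ≥ 0`,
then the sequence `(q_{F_n}(z))_{n ≥ 0}` is unbounded. -/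
theorem stmt12 (p : ℕ → ℝ) (hp : ∀ i, 1 ≤ i → 0 < p i ∧ p i ≤ 1)
    (z : ℂ) (k : ℕ) (h1 : 1 < ‖qF p z k‖) (h2 : 1 < ‖qF p z (k+1)‖) :
    ¬ ∃ C : ℝ, ∀ n : ℕ, ‖qF p z n‖ ≤ C := by
  rintro ⟨C, hC⟩
  have hgrowth : Tendsto (fun n => ‖qF p z (k + n)‖) atTop atTop :=
    tendsto_atTop_of_mul_le_add_two (lt_min h1 h2) (min_le_left _ _) (min_le_right _ _)
      fun n => norm_mul_norm_le_norm_qF_add_two p hp z (k + n)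
  obtain ⟨n, hn⟩ := (hgrowth.eventually_gt_atTop C).exists
  exact (hC (k + n)).not_gt hn
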